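/- For every integer n ≥ 0 and each j ∈ {1,2}, there is at most one bipartition λ with |λ| = n satisfying ẽ_i^{[j]}λ = 0 for all i ∈ ℤ. -/

import Mathlib

/-- A partition: a weakly decreasing, eventually zero sequence of nonnegative integers.
`part k` is the `(k+1)`-st part, i.e. the length of row `k+1`. -/
structure Partn where
  part : ℕ → ℕ
  antitone : ∀ k, part (k + 1) ≤ part k
  finite : ∃ N, ∀ k, N ≤ k → part k = 0

/-- The size `|λ| = Σ_k λ_k` of a partition (all parts beyond the chosen bound vanish). -/
noncomputable def Partn.size (p : Partn) : ℕ :=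
  ∑ k ∈ Finset.range (Classical.choose p.finite), p.part k

/-- A bipartition `λ = (λ^{(1)}, λ^{(2)})`: component `0` is `λ^{(1)}`, component `1`
is `λ^{(2)}`. -/
abbrev Bipartn : Type := Fin 2 → Partn

/-- The total number of boxes `|λ| = |λ^{(1)}| + |λ^{(2)}|`. -/
noncomputable def Bipartn.size (lam : Bipartn) : ℕ := (lam 0).size + (lam 1).size

/-- Row `k` (0-indexed) has an addable box at its end. -/
def AddableRow (p : Partn) (k : ℕ) : Prop :=
  k = 0 ∨ p.part k < p.part (k - 1)

/-- Row `k` (0-indexed) has a removable box at its end. -/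
def RemovableRow (p : Partn) (k : ℕ) : Prop :=
  p.part (k + 1) < p.part k

/-- The content of the addable box in row `k` (0-indexed) of component `c`:
for the first component (`c = 0`) the box `(x, y) = (part k + 1, k + 1)` has content
`y - x = k - part k`; for the second component (`c = 1`) it has content
`x - y + m = part k - k + m`. -/
def contA (m : ℤ) (c : Fin 2) (p : Partn) (k : ℕ) : ℤ :=
  if c = 0 then (k : ℤ) - p.part k else ((p.part k : ℤ) - k) + m

/-- The content of the removable box in row `k` (0-indexed) of component `c`:
for the first component the box `(x, y) = (part k, k + 1)` has content
`y - x = k + 1 - part k`; for the second component it has content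
`x - y + m = part k - (k + 1) + m`. -/
def contR (m : ℤ) (c : Fin 2) (p : Partn) (k : ℕ) : ℤ :=
  if c = 0 then ((k : ℤ) + 1) - p.part k else ((p.part k : ℤ) - ((k : ℤ) + 1)) + m

/-- A letter of a signature: a sign (`true` = '+', `false` = '−') together with the
component and the (0-indexed) row of the corresponding addable/removable box. -/
abbrev Letter : Type := Bool × Fin 2 × ℕ

open Classical in
/-- The letter of content `i` coming from component `c` of a bipartition: `'+'` if that
component has an addable box of content `i`, `'−'` if it has a removable box of content
`i`, nothing otherwise (each component has at most one such box, and not both). -/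
noncomputable def compLetter (m : ℤ) (c : Fin 2) (p : Partn) (i : ℤ) : Option Letter :=
  if h : ∃ k, AddableRow p k ∧ contA m c p k = i then some (true, c, Classical.choose h)
  else if h : ∃ k, RemovableRow p k ∧ contR m c p k = i then
    some (false, c, Classical.choose h)
  else none

/-- The `i`-signature of a bipartition for the crystal `[j]` (`ord = 0` encodes `[1]`,
`ord = 1` encodes `[2]`): for `[1]` the letter of the first component is listed first,
for `[2]` the letter of the second component is listed first. -/
noncomputable def word (m : ℤ) (ord : Fin 2) (lam : Bipartn) (i : ℤ) : List Letter :=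
  if ord = 0 then
    (compLetter m 0 (lam 0) i).toList ++ (compLetter m 1 (lam 1) i).toList
  else
    (compLetter m 1 (lam 1) i).toList ++ (compLetter m 0 (lam 0) i).toList

/-- Delete the subword `−+` if it occurs (reduction of the signature). -/
def reduceL : List Letter → List Letter
  | [] => []
  | a :: w =>
    match a.1, reduceL w with
    | false, (true, _) :: tail => tail
    | _, r => a :: r

/-- The box (component, row) removed by `ẽ_i^{[j]}`: the box of the leftmost '−' in the
reduced `i`-signature; `none` when the reduced signature has no '−', i.e. when
`ẽ_i^{[j]} λ = 0`. -/
noncomputable def eAct (m : ℤ) (ord : Fin 2) (i : ℤ) (lam : Bipartn) :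
    Option (Fin 2 × ℕ) :=
  ((reduceL (word m ord lam i)).find? (fun a => !a.1)).map (fun a => a.2)

/-- The box (component, row) added by `f̃_i^{[j]}`: the box of the rightmost '+' in the
reduced `i`-signature; `none` when the reduced signature has no '+', i.e. when
`f̃_i^{[j]} λ = 0`. -/
noncomputable def fAct (m : ℤ) (ord : Fin 2) (i : ℤ) (lam : Bipartn) :
    Option (Fin 2 × ℕ) :=
  ((reduceL (word m ord lam i)).reverse.find? (fun a => a.1)).map (fun a => a.2)

/-- `mu` is obtained from `lam` by removing the box at the end of row `k` of
component `c`. -/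
def RemoveBox (lam : Bipartn) (c : Fin 2) (k : ℕ) (mu : Bipartn) : Prop :=
  (mu c).part k + 1 = (lam c).part k ∧
  (∀ k', k' ≠ k → (mu c).part k' = (lam c).part k') ∧
  (∀ c', c' ≠ c → ∀ k', (mu c').part k' = (lam c').part k')

/-- `mu` is obtained from `lam` by adding a box at the end of row `k` of component `c`. -/
def AddBox (lam : Bipartn) (c : Fin 2) (k : ℕ) (mu : Bipartn) : Prop :=
  (mu c).part k = (lam c).part k + 1 ∧
  (∀ k', k' ≠ k → (mu c).part k' = (lam c).part k') ∧
  (∀ c', c' ≠ c → ∀ k', (mu c').part k' = (lam c').part k')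

/-- `ẽ_i^{[j]} lam = mu` (in particular `ẽ_i^{[j]} lam ≠ 0`). -/
def ERel (m : ℤ) (ord : Fin 2) (i : ℤ) (lam mu : Bipartn) : Prop :=
  ∃ c k, eAct m ord i lam = some (c, k) ∧ RemoveBox lam c k mu

/-- `f̃_i^{[j]} lam = mu` (in particular `f̃_i^{[j]} lam ≠ 0`). -/
def FRel (m : ℤ) (ord : Fin 2) (i : ℤ) (lam mu : Bipartn) : Prop :=
  ∃ c k, fAct m ord i lam = some (c, k) ∧ AddBox lam c k mu

/-!
If every `ẽ_i` kills `λ`, a `−` of the component listed second could only be cancelled by a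
`+` to its right, so that component has no removable box and is empty. A `−` of the
component listed first can then only be cancelled by the `+` of the addable box `(1, 1)` of
the empty component, so all its removable boxes have the same content: it is a rectangle
with `w` columns and `r = w + m` rows. Such a rectangle is determined by its size
`w (w + m)`.
-/

namespace Partn

@[ext]
lemma ext {p q : Partn} (h : ∀ k, p.part k = q.part k) : p = q := by
  obtain ⟨p, _, _⟩ := p
  obtain ⟨q, _, _⟩ := q
  congr
  exact funext h

lemma part_anti (p : Partn) : Antitone p.part :=
  antitone_nat_of_succ_le p.antitone

lemma size_eq_sum_range (p : Partn) {M : ℕ} (hM : ∀ k ≥ M, p.part k = 0) :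
    p.size = ∑ k ∈ Finset.range M, p.part k := by
  have hN := Classical.choose_spec p.finite
  rw [size, ← Finset.eventually_constant_sum hN (le_max_left _ M),
    Finset.eventually_constant_sum hM (le_max_right _ M)]

def rect (r w : ℕ) : Partn where
  part k := if k < r then w else 0
  antitone k := by split_ifs <;> omega
  finite := ⟨r, fun k hk => if_neg (by omega)⟩

lemma size_rect (r w : ℕ) : (rect r w).size = r * w := by
  rw [size_eq_sum_range (rect r w) (M := r) fun k hk => if_neg (by omega)]
  simp only [rect]
  rw [Finset.sum_ite_of_true fun k hk => Finset.mem_range.mp hk]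
  simp

lemma rect_eq_rect_zero_of_mul_eq_zero {r w : ℕ} (h : r * w = 0) : rect r w = rect 0 0 := by
  ext k
  simp only [rect]
  rcases Nat.mul_eq_zero.mp h with rfl | rfl <;> simp

/-- Rectangles with `r = w + m` are determined by their size, because `w ↦ w (w + m)` is
injective where it is positive. -/
lemma rect_eq_rect_of_mul_eq {m : ℤ} {r₁ w₁ r₂ w₂ : ℕ} (h₁ : (r₁ : ℤ) = w₁ + m)
    (h₂ : (r₂ : ℤ) = w₂ + m) (h : r₁ * w₁ = r₂ * w₂) : rect r₁ w₁ = rect r₂ w₂ := by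
  rcases Nat.eq_zero_or_pos (r₁ * w₁) with h0 | hpos
  · rw [rect_eq_rect_zero_of_mul_eq_zero h0,
      rect_eq_rect_zero_of_mul_eq_zero (h.symm.trans h0)]
  have hw₁ : 0 < w₁ := Nat.pos_of_mul_pos_left hpos
  have hr₂ : 0 < r₂ := Nat.pos_of_mul_pos_right (h ▸ hpos)
  have hfactor : ((w₁ : ℤ) - w₂) * (w₁ + w₂ + m) = 0 := by
    have hz : (r₁ : ℤ) * w₁ = r₂ * w₂ := by exact_mod_cast h
    rw [h₁, h₂] at hz
    linear_combination hz
  have hw : w₁ = w₂ := by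
    rcases mul_eq_zero.mp hfactor with hw | hw <;> omega
  obtain rfl : r₁ = r₂ := by omega
  rw [hw]

lemma part_eq_of_forall_not_removableRow (p : Partn) {a b : ℕ} (hab : a ≤ b)
    (h : ∀ k, a ≤ k → k < b → ¬ RemovableRow p k) : p.part b = p.part a := by
  induction b, hab using Nat.le_induction with
  | base => rfl
  | succ b hab ih =>
    have hb := h b hab (Nat.lt_succ_self b)
    rw [RemovableRow, not_lt] at hb
    rw [← ih fun k hak hkb => h k hak (by omega)]
    exact le_antisymm (p.antitone b) hb

lemma eq_rect_of_removableRow_subsingleton (p : Partn)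
    (h : ∀ k₁ k₂, RemovableRow p k₁ → RemovableRow p k₂ → k₁ = k₂) :
    p = rect 0 0 ∨ ∃ k₀, RemovableRow p k₀ ∧ p = rect (k₀ + 1) (p.part k₀) := by
  obtain ⟨N, hN⟩ := p.finite
  have hvanish : ∀ k, (∀ j, k ≤ j → ¬ RemovableRow p j) → p.part k = 0 := fun k hk => by
    rw [← p.part_eq_of_forall_not_removableRow (le_max_left k N) fun j hj _ => hk j hj]
    exact hN _ (le_max_right k N)
  by_cases hex : ∃ k₀, RemovableRow p k₀
  · obtain ⟨k₀, hk₀⟩ := hex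
    refine Or.inr ⟨k₀, hk₀, Partn.ext fun k => ?_⟩
    simp only [rect]
    split_ifs with hk
    · exact (p.part_eq_of_forall_not_removableRow (Nat.lt_succ_iff.mp hk)
        fun j _ hj hjr => (Nat.ne_of_lt hj) (h j k₀ hjr hk₀)).symm
    · exact hvanish k fun j hj hjr => by have := h j k₀ hjr hk₀; omega
  · push Not at hex
    exact Or.inl (Partn.ext fun k => hvanish k fun j _ => hex j)

end Partn

/-- Along the rows, `k - part k` strictly increases, so contents of removable boxes are
distinct. -/
lemma contR_injective (m : ℤ) (c : Fin 2) (p : Partn) :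
    Function.Injective (contR m c p) := by
  intro k₁ k₂ h
  rcases lt_trichotomy k₁ k₂ with hk | hk | hk
  all_goals
    have := p.part_anti hk.le
    fin_cases c <;> simp [contR] at h <;> omega

section Signature

variable {m : ℤ} {c : Fin 2} {p : Partn}

lemma contA_ne_contR {a r : ℕ} (hr : RemovableRow p r) : contA m c p a ≠ contR m c p r := by
  unfold RemovableRow at hr
  intro h
  rcases le_or_gt a r with har | har
  · have := p.part_anti har
    fin_cases c <;> simp [contA, contR] at h <;> omega
  · have := p.part_anti (show r + 1 ≤ a from har)
    fin_cases c <;> simp [contA, contR] at h <;> omega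

lemma compLetter_contR {k : ℕ} (hk : RemovableRow p k) :
    compLetter m c p (contR m c p k) = some (false, c, k) := by
  have hA : ¬ ∃ a, AddableRow p a ∧ contA m c p a = contR m c p k :=
    fun ⟨_, _, ha⟩ => contA_ne_contR hk ha
  have hR : ∃ k', RemovableRow p k' ∧ contR m c p k' = contR m c p k := ⟨k, hk, rfl⟩
  rw [compLetter, dif_neg hA, dif_pos hR, contR_injective m c p (Classical.choose_spec hR).2]

lemma compLetter_rect_zero {i : ℤ} (hi : i ≠ contA m c (Partn.rect 0 0) 0) :
    compLetter m c (Partn.rect 0 0) i = none := by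
  have hA : ¬ ∃ a, AddableRow (Partn.rect 0 0) a ∧ contA m c (Partn.rect 0 0) a = i := by
    rintro ⟨a, ha | ha, rfl⟩
    · exact hi (by rw [ha])
    · simp [Partn.rect] at ha
  have hR : ¬ ∃ r, RemovableRow (Partn.rect 0 0) r ∧ contR m c (Partn.rect 0 0) r = i := by
    rintro ⟨r, hr, -⟩
    simp [RemovableRow, Partn.rect] at hr
  rw [compLetter, dif_neg hA, dif_neg hR]

lemma sign_eq_true_of_eAct_eq_none {ord : Fin 2} {i : ℤ} {lam : Bipartn}
    (h : eAct m ord i lam = none) : ∀ a ∈ reduceL (word m ord lam i), a.1 = true := by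
  rw [eAct, Option.map_eq_none_iff, List.find?_eq_none] at h
  simpa using h

end Signature

lemma word_eq_append (m : ℤ) (ord : Fin 2) (lam : Bipartn) (i : ℤ) :
    word m ord lam i =
      (compLetter m ord (lam ord) i).toList ++
        (compLetter m ord.rev (lam ord.rev) i).toList := by
  fin_cases ord <;> rfl

/-- A final `−` can only cancel against a `+` to its right, so it survives reduction. -/
lemma minus_mem_reduceL_append (o : Option Letter) (x : Fin 2 × ℕ) :
    (false, x) ∈ reduceL (o.toList ++ [(false, x)]) := by
  rcases o with _ | ⟨_ | _, _⟩ <;> simp [reduceL]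

lemma Fin.eq_or_eq_rev_of_two (a b : Fin 2) : b = a ∨ b = a.rev := by
  fin_cases a <;> fin_cases b <;> decide

lemma Bipartn.size_eq_add (lam : Bipartn) (c : Fin 2) :
    lam.size = (lam c).size + (lam c.rev).size := by
  fin_cases c
  · rfl
  · exact Nat.add_comm _ _

/-- For the removable corner `(w, r)` of component `c`, matching the content of the addable
box `(1, 1)` of the empty other component says `r = w + m`. -/
lemma contR_eq_contA_rev_rect_zero_iff (m : ℤ) (c : Fin 2) (p : Partn) (k : ℕ) :
    contR m c p k = contA m c.rev (Partn.rect 0 0) 0 ↔ (k : ℤ) + 1 = p.part k + m := by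
  fin_cases c <;> simp [contR, contA, Partn.rect] <;> omega

section Singular

variable {m : ℤ} {ord : Fin 2} {lam : Bipartn}

lemma not_removableRow_rev_of_singular (hs : ∀ i, eAct m ord i lam = none) (k : ℕ) :
    ¬ RemovableRow (lam ord.rev) k := by
  intro hk
  set i := contR m ord.rev (lam ord.rev) k
  have hmem := minus_mem_reduceL_append (compLetter m ord (lam ord) i) (ord.rev, k)
  rw [← Option.toList_some, ← compLetter_contR hk, ← word_eq_append] at hmem
  exact Bool.false_ne_true (sign_eq_true_of_eAct_eq_none (hs i) _ hmem)

lemma rev_eq_rect_zero_of_singular (hs : ∀ i, eAct m ord i lam = none) :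
    lam ord.rev = Partn.rect 0 0 :=
  ((lam ord.rev).eq_rect_of_removableRow_subsingleton fun k _ hk _ =>
    (not_removableRow_rev_of_singular hs k hk).elim).resolve_right
    fun ⟨k, hk, _⟩ => not_removableRow_rev_of_singular hs k hk

lemma contR_eq_of_singular (hs : ∀ i, eAct m ord i lam = none) {k : ℕ}
    (hk : RemovableRow (lam ord) k) :
    contR m ord (lam ord) k = contA m ord.rev (Partn.rect 0 0) 0 := by
  set i := contR m ord (lam ord) k
  by_contra hne
  have hword : word m ord lam i = [(false, ord, k)] := by
    rw [word_eq_append, compLetter_contR hk, rev_eq_rect_zero_of_singular hs,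
      compLetter_rect_zero hne]
    rfl
  refine Bool.false_ne_true (sign_eq_true_of_eAct_eq_none (hs i) (false, ord, k) ?_)
  simp [hword, reduceL]

lemma eq_rect_of_singular (hs : ∀ i, eAct m ord i lam = none) :
    ∃ r w : ℕ, (r : ℤ) = w + m ∧ lam ord = Partn.rect r w := by
  have huniq : ∀ k₁ k₂, RemovableRow (lam ord) k₁ → RemovableRow (lam ord) k₂ → k₁ = k₂ :=
    fun k₁ k₂ h₁ h₂ => contR_injective m ord _
      ((contR_eq_of_singular hs h₁).trans (contR_eq_of_singular hs h₂).symm)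
  rcases (lam ord).eq_rect_of_removableRow_subsingleton huniq with h | ⟨k₀, hk₀, h⟩
  · refine ⟨m.toNat, (-m).toNat, by omega,
      h.trans (Partn.rect_eq_rect_zero_of_mul_eq_zero ?_).symm⟩
    rcases le_total 0 m with hm | hm <;> simp [hm]
  · have hcont := contR_eq_of_singular hs hk₀
    rw [contR_eq_contA_rev_rect_zero_iff] at hcont
    exact ⟨k₀ + 1, (lam ord).part k₀, by push_cast; exact hcont, h⟩

end Singular

/-- For every `n` and each crystal `[j]` (`ord = 0` encodes `[1]`, `ord = 1` encodes
`[2]`), there is at most one bipartition with `n` boxes annihilated by all the crystal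
operators `ẽ_i^{[j]}`, `i ∈ ℤ`. -/
theorem at_most_one_singular_bipartition (m : ℤ) (n : ℕ) (ord : Fin 2)
    (lam mu : Bipartn) (hlam : lam.size = n) (hmu : mu.size = n)
    (hslam : ∀ i : ℤ, eAct m ord i lam = none)
    (hsmu : ∀ i : ℤ, eAct m ord i mu = none) :
    lam = mu := by
  obtain ⟨r₁, w₁, hrw₁, hlam_ord⟩ := eq_rect_of_singular hslam
  obtain ⟨r₂, w₂, hrw₂, hmu_ord⟩ := eq_rect_of_singular hsmu
  have hsize := hlam.trans hmu.symm
  rw [Bipartn.size_eq_add lam ord, Bipartn.size_eq_add mu ord, hlam_ord, hmu_ord,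
    rev_eq_rect_zero_of_singular hslam, rev_eq_rect_zero_of_singular hsmu] at hsize
  simp only [Partn.size_rect, Nat.mul_zero, Nat.add_zero] at hsize
  funext c
  rcases ord.eq_or_eq_rev_of_two c with rfl | rfl
  · rw [hlam_ord, hmu_ord, Partn.rect_eq_rect_of_mul_eq hrw₁ hrw₂ hsize]
  · rw [rev_eq_rect_zero_of_singular hslam, rev_eq_rect_zero_of_singular hsmu]
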